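/- Suppose Φ is Schur, H has strictly positive entries, and the sequence O_k = {Z : C Φ^j Z ≤ H, 0 ≤ j ≤ k} has O_0 bounded. Then there exists a finite k* such that O_{k*} = O_∞; i.e., the maximal output admissible set is finitely determined. -/

import Mathlib

open Matrix

def IsSchur {N : Type*} [Fintype N] [DecidableEq N] (M : Matrix N N ℝ) : Prop :=
  ∀ μ ∈ spectrum ℂ (M.map (algebraMap ℝ ℂ)), ‖μ‖ < 1

open Filter
open scoped NNReal ENNReal

section aux
attribute [local instance] Matrix.linftyOpNormedRing Matrix.linftyOpNormedAlgebra
  Matrix.linftyOpNormedAddCommGroup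

theorem aux_pow_tendsto_zero {A : Type*} [NormedRing A] [NormedAlgebra ℂ A] [CompleteSpace A]
    (a : A) (h : spectralRadius ℂ a < 1) :
    Tendsto (fun k : ℕ => ‖a ^ k‖) atTop (nhds 0) := by
  obtain ⟨r, hr1, hr2⟩ := ENNReal.lt_iff_exists_nnreal_btwn.mp h
  have hr1' : (r : ℝ) < 1 := by exact_mod_cast hr2
  have hG := spectrum.pow_nnnorm_pow_one_div_tendsto_nhds_spectralRadius a
  have hev : ∀ᶠ k : ℕ in atTop, (‖a ^ k‖₊ : ENNReal) ^ (1 / (k : ℝ)) < (r : ENNReal) :=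
    hG.eventually_lt_const hr1
  have hbound : ∀ᶠ k : ℕ in atTop, ‖a ^ k‖ ≤ (r : ℝ) ^ k := by
    filter_upwards [hev, eventually_ge_atTop 1] with k hk hk1
    have hk0 : (k : ℝ) ≠ 0 := by positivity
    have key : ((‖a ^ k‖₊ : ENNReal) ^ (1 / (k:ℝ))) ^ (k:ℝ) = (‖a ^ k‖₊ : ENNReal) := by
      rw [← ENNReal.rpow_mul, one_div, inv_mul_cancel₀ hk0, ENNReal.rpow_one]
    have hlt : (‖a ^ k‖₊ : ENNReal) < ((r ^ k : ℝ≥0) : ENNReal) := by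
      rw [← key, ENNReal.coe_pow, ← ENNReal.rpow_natCast (r : ENNReal) k]
      exact ENNReal.rpow_lt_rpow hk (by positivity)
    have hle : ‖a ^ k‖₊ ≤ r ^ k := (ENNReal.coe_lt_coe.mp hlt).le
    calc ‖a ^ k‖ = ((‖a ^ k‖₊ : ℝ≥0) : ℝ) := (coe_nnnorm _).symm
      _ ≤ ((r ^ k : ℝ≥0) : ℝ) := NNReal.coe_le_coe.mpr hle
      _ = (r : ℝ) ^ k := by push_cast; ring
  exact squeeze_zero' (Eventually.of_forall fun k => norm_nonneg _) hbound
    (tendsto_pow_atTop_nhds_zero_of_lt_one r.coe_nonneg hr1')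

theorem aux_norm_map_eq {p q : ℕ} (M : Matrix (Fin p) (Fin q) ℝ) :
    ‖M‖ = ‖M.map (algebraMap ℝ ℂ)‖ := by
  rw [Matrix.linfty_opNorm_def, Matrix.linfty_opNorm_def]
  congr 1
  exact Finset.sup_congr rfl fun i _ => Finset.sum_congr rfl fun j _ => by
    simp [Matrix.map_apply, Complex.nnnorm_real]

theorem moas_key {n m : ℕ} (Φ : Matrix (Fin n) (Fin n) ℝ)
    (C : Matrix (Fin m) (Fin n) ℝ) (H : Fin m → ℝ)
    (hΦ : IsSchur Φ) (hH : ∀ i, 0 < H i)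
    (hbdd : Bornology.IsBounded {Z : Fin n → ℝ | ∀ i, C.mulVec Z i ≤ H i}) :
    ∃ kstar : ℕ,
      {Z : Fin n → ℝ | ∀ j ≤ kstar, ∀ i, C.mulVec ((Φ ^ j).mulVec Z) i ≤ H i} =
      {Z : Fin n → ℝ | ∀ k : ℕ, ∀ i, C.mulVec ((Φ ^ k).mulVec Z) i ≤ H i} := by
  set a : Matrix (Fin n) (Fin n) ℂ := Φ.map (algebraMap ℝ ℂ) with ha_def
  -- spectral radius < 1
  have hsr : spectralRadius ℂ a < 1 := by
    rcases isEmpty_or_nonempty (Fin n) with hn | hn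
    · haveI : Subsingleton (Matrix (Fin n) (Fin n) ℂ) :=
        ⟨fun M N => by ext i j; exact isEmptyElim i⟩
      have h0 : spectralRadius ℂ a = 0 := by simp [spectralRadius]
      rw [h0]; exact zero_lt_one
    · haveI : Nontrivial (Matrix (Fin n) (Fin n) ℂ) := by infer_instance
      have := spectrum.spectralRadius_lt_of_forall_lt (a := a) (r := 1)
        (fun z hz => by simpa [← NNReal.coe_lt_one, coe_nnnorm] using hΦ z hz)
      simpa using this
  have htend := aux_pow_tendsto_zero a hsr
  -- bound on powers of Φ
  have hpow : ∀ k : ℕ, ‖Φ ^ k‖ ≤ ‖a ^ k‖ := by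
    intro k
    have : a ^ k = (Φ ^ k).map (algebraMap ℝ ℂ) := by
      simpa [ha_def] using (map_pow ((algebraMap ℝ ℂ).mapMatrix) Φ k).symm
    rw [this, ← aux_norm_map_eq]
  -- bound R on O_0
  obtain ⟨R0, hR0⟩ := hbdd.subset_closedBall 0
  set R : ℝ := max R0 0 with hR_def
  have hR_nonneg : 0 ≤ R := le_max_right _ _
  have hRmem : ∀ Z : Fin n → ℝ, (∀ i, C.mulVec Z i ≤ H i) → ‖Z‖ ≤ R := by
    intro Z hZ
    have := hR0 hZ
    rw [Metric.mem_closedBall, dist_zero_right] at this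
    exact this.trans (le_max_left _ _)
  -- ε
  obtain ⟨ε, hε0, hεH⟩ : ∃ ε > 0, ∀ i, ε ≤ H i := by
    rcases isEmpty_or_nonempty (Fin m) with hm | hm
    · exact ⟨1, one_pos, fun i => isEmptyElim i⟩
    · refine ⟨Finset.univ.inf' Finset.univ_nonempty H, ?_, fun i => Finset.inf'_le _ (by simp)⟩
      exact (Finset.lt_inf'_iff _).mpr fun i _ => hH i
  set D : ℝ := ‖C‖ * R + 1 with hD_def
  have hD0 : 0 < D := by positivity
  obtain ⟨N, hN⟩ := eventually_atTop.mp (htend.eventually_lt_const (show (0:ℝ) < ε / D by positivity))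
  refine ⟨N, Set.Subset.antisymm ?_ fun Z hZ j _ i => hZ j i⟩
  intro Z hZ
  intro k i
  by_cases hk : k ≤ N
  · exact hZ k hk i
  · push_neg at hk
    have hZ0 : ∀ i, C.mulVec Z i ≤ H i := fun i => by
      simpa using hZ 0 (Nat.zero_le _) i
    have hZR : ‖Z‖ ≤ R := hRmem Z hZ0
    have h1 : C.mulVec ((Φ ^ k).mulVec Z) i ≤ ‖C.mulVec ((Φ ^ k).mulVec Z)‖ := by
      have h := norm_le_pi_norm (C.mulVec ((Φ ^ k).mulVec Z)) i
      rw [Real.norm_eq_abs] at h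
      exact (le_abs_self _).trans h
    have h2 : ‖C.mulVec ((Φ ^ k).mulVec Z)‖ ≤ ‖C‖ * ‖(Φ ^ k).mulVec Z‖ :=
      Matrix.linfty_opNorm_mulVec _ _
    have h3 : ‖(Φ ^ k).mulVec Z‖ ≤ ‖Φ ^ k‖ * ‖Z‖ := Matrix.linfty_opNorm_mulVec _ _
    have h4 : ‖a ^ k‖ < ε / D := hN k hk.le
    have h5 : ‖Φ ^ k‖ ≤ ‖a ^ k‖ := hpow k
    have hC0 : (0:ℝ) ≤ ‖C‖ := norm_nonneg _
    have hak0 : (0:ℝ) ≤ ‖a ^ k‖ := norm_nonneg _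
    have hfk0 : (0:ℝ) ≤ ‖Φ ^ k‖ := norm_nonneg _
    have hZ0' : (0:ℝ) ≤ ‖Z‖ := norm_nonneg _
    have key : ‖C‖ * (‖Φ ^ k‖ * ‖Z‖) < ε := by
      have e1 : ‖Φ ^ k‖ * ‖Z‖ ≤ ‖a ^ k‖ * R := mul_le_mul h5 hZR hZ0' hak0
      have e2 : ‖C‖ * (‖Φ ^ k‖ * ‖Z‖) ≤ ‖C‖ * (‖a ^ k‖ * R) :=
        mul_le_mul_of_nonneg_left e1 hC0
      have e3 : ‖C‖ * (‖a ^ k‖ * R) ≤ D * ‖a ^ k‖ := by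
        have : ‖C‖ * R ≤ D := by simp [hD_def]
        calc ‖C‖ * (‖a ^ k‖ * R) = (‖C‖ * R) * ‖a ^ k‖ := by ring
          _ ≤ D * ‖a ^ k‖ := mul_le_mul_of_nonneg_right this hak0
      have e4 : D * ‖a ^ k‖ < D * (ε / D) := (mul_lt_mul_iff_right₀ hD0).mpr h4
      have e5 : D * (ε / D) = ε := by field_simp
      linarith
    have h6 : ‖C‖ * ‖(Φ ^ k).mulVec Z‖ ≤ ‖C‖ * (‖Φ ^ k‖ * ‖Z‖) :=
      mul_le_mul_of_nonneg_left h3 hC0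
    have := hεH i
    linarith
end aux

/-- If `Φ` is Schur, `H > 0` componentwise and `O_0 = {Z : C Z ≤ H}` is bounded, then the
maximal output admissible set is finitely determined: there is `k*` with `O_{k*} = O_∞`. -/
theorem moas_finitely_determined {n m : ℕ} (Φ : Matrix (Fin n) (Fin n) ℝ)
    (C : Matrix (Fin m) (Fin n) ℝ) (H : Fin m → ℝ)
    (hΦ : IsSchur Φ) (hH : ∀ i, 0 < H i)
    (hbdd : Bornology.IsBounded {Z : Fin n → ℝ | ∀ i, C.mulVec Z i ≤ H i}) :
    ∃ kstar : ℕ,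
      {Z : Fin n → ℝ | ∀ j ≤ kstar, ∀ i, C.mulVec ((Φ ^ j).mulVec Z) i ≤ H i} =
      {Z : Fin n → ℝ | ∀ k : ℕ, ∀ i, C.mulVec ((Φ ^ k).mulVec Z) i ≤ H i} := by
  exact moas_key Φ C H hΦ hH hbdd
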